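/- Let A be a Hermitian N×N complex matrix, let A₁ = A ⊗ I and A₂ = I ⊗ A act on the composite system ℂ^{N·N}, and let S = A₁ + A₂. If ψ is a unit vector in ℂ^{N·N} with S *ᵥ ψ = (s : ℝ) • ψ for some real s, then the variances coincide: Var_ψ(A₁) = Var_ψ(A₂). -/

import Mathlib

open Kronecker

/-- Expectation of an observable `M` in the state `ψ` of the composite system:
`E_ψ(M) = ⟨ψ, M *ᵥ ψ⟩` (for Hermitian `M` this is real, and we take the real part). -/
noncomputable def expVal₂ {N : ℕ} (ψ : EuclideanSpace ℂ (Fin N × Fin N))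
    (M : Matrix (Fin N × Fin N) (Fin N × Fin N) ℂ) : ℝ :=
  (inner ℂ ψ (Matrix.toEuclideanLin M ψ) : ℂ).re

/-- Variance: `Var_ψ(M) = E_ψ(M·M) − E_ψ(M)²`. -/
noncomputable def varVal₂ {N : ℕ} (ψ : EuclideanSpace ℂ (Fin N × Fin N))
    (M : Matrix (Fin N × Fin N) (Fin N × Fin N) ℂ) : ℝ :=
  expVal₂ ψ (M * M) - (expVal₂ ψ M) ^ 2

lemma var_aux {N : ℕ} (ψ : EuclideanSpace ℂ (Fin N × Fin N)) (hψ : ‖ψ‖ = 1) (s : ℝ)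
    (u v : EuclideanSpace ℂ (Fin N × Fin N)) (huv : u + v = (s : ℂ) • ψ) :
    ‖u‖^2 - ((inner ℂ ψ u : ℂ).re)^2 = ‖v‖^2 - ((inner ℂ ψ v : ℂ).re)^2 := by
  have hv : v = (s : ℂ) • ψ - u := by rw [← huv]; abel
  have hnψ : (inner ℂ ψ ψ : ℂ) = 1 := by
    rw [inner_self_eq_norm_sq_to_K]; simp [hψ]
  have h1 : (inner ℂ ψ v : ℂ).re = s - (inner ℂ ψ u : ℂ).re := by
    rw [hv, inner_sub_right, inner_smul_right, hnψ, mul_one, Complex.sub_re,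
      Complex.ofReal_re]
  have h2 : ‖v‖^2 = s^2 - 2*s*(inner ℂ ψ u : ℂ).re + ‖u‖^2 := by
    rw [hv, norm_sub_sq (𝕜 := ℂ), inner_smul_left, Complex.conj_ofReal, norm_smul, hψ,
      mul_one]
    have : RCLike.re ((s:ℂ) * inner ℂ ψ u) = s * (inner ℂ ψ u : ℂ).re :=
      Complex.re_ofReal_mul _ _
    rw [this, Complex.norm_real, Real.norm_eq_abs, sq_abs]
    ring
  rw [h1, h2]; ring

/-- Let `A` be Hermitian, `A₁ = A ⊗ I`, `A₂ = I ⊗ A`, `S = A₁ + A₂`.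
If `ψ` is a unit vector of the composite system with `S *ᵥ ψ = s • ψ` for a real `s`,
then `Var_ψ(A₁) = Var_ψ(A₂)`. -/
theorem var_A1_eq_var_A2 {N : ℕ} (A : Matrix (Fin N) (Fin N) ℂ)
    (hA : A.IsHermitian)
    (ψ : EuclideanSpace ℂ (Fin N × Fin N)) (hψ : ‖ψ‖ = 1) (s : ℝ)
    (hS : Matrix.toEuclideanLin
        (A ⊗ₖ (1 : Matrix (Fin N) (Fin N) ℂ) + (1 : Matrix (Fin N) (Fin N) ℂ) ⊗ₖ A) ψ
      = (s : ℂ) • ψ) :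
    varVal₂ ψ (A ⊗ₖ (1 : Matrix (Fin N) (Fin N) ℂ))
      = varVal₂ ψ ((1 : Matrix (Fin N) (Fin N) ℂ) ⊗ₖ A) := by
  set A₁ := A ⊗ₖ (1 : Matrix (Fin N) (Fin N) ℂ) with hA₁
  set A₂ := (1 : Matrix (Fin N) (Fin N) ℂ) ⊗ₖ A with hA₂
  have hH1 : A₁.IsHermitian := by
    ext ⟨i, j⟩ ⟨k, l⟩
    simp [hA₁, Matrix.conjTranspose_apply, Matrix.one_apply, apply_ite (star : ℂ → ℂ),
      hA.apply, eq_comm]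
  have hH2 : A₂.IsHermitian := by
    ext ⟨i, j⟩ ⟨k, l⟩
    simp [hA₂, Matrix.conjTranspose_apply, Matrix.one_apply, apply_ite (star : ℂ → ℂ),
      hA.apply, eq_comm]
  have hcomp : ∀ M : Matrix (Fin N × Fin N) (Fin N × Fin N) ℂ,
      Matrix.toEuclideanLin (M * M) ψ
        = Matrix.toEuclideanLin M (Matrix.toEuclideanLin M ψ) := by
    intro M
    simp [Matrix.toEuclideanLin_apply, Matrix.mulVec_mulVec]
  have key : ∀ M : Matrix (Fin N × Fin N) (Fin N × Fin N) ℂ, M.IsHermitian →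
      varVal₂ ψ M = ‖Matrix.toEuclideanLin M ψ‖^2
        - ((inner ℂ ψ (Matrix.toEuclideanLin M ψ) : ℂ).re)^2 := by
    intro M hM
    have hsym := Matrix.isHermitian_iff_isSymmetric.mp hM
    unfold varVal₂ expVal₂
    rw [hcomp M, ← hsym ψ (Matrix.toEuclideanLin M ψ)]
    congr 1
    rw [← @inner_self_eq_norm_sq ℂ]
    rfl
  rw [key A₁ hH1, key A₂ hH2]
  apply var_aux ψ hψ s
  rw [map_add, LinearMap.add_apply] at hS
  exact hS
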